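/- arXiv:1809.08732 — 4 statements merged into one kernel-verified Lean document; each statement's English description precedes it below -/
import Mathlib

section
/- For a finite population of real numbers z_1,...,z_n with mean z̄ and variance σ² = (1/n)∑(z_i - z̄)², if A is a uniformly random subset of {1,...,n} of fixed size n_A selected without replacement, with p_A = n_A/n and ς = min{1/70, (3p_A)²/70, (3-3p_A)²/70}, then for any t > 0, P(z̄_A - z̄ ≥ t) ≤ exp(-p_A·n_A·t² / ((1+ς)²·σ²)), where z̄_A is the sample mean over A. -/
/-
Chernoff's method. For every real `l`, induction on the finite set `s` gives
  `∑_{A ⊆ s, #A = m} exp (l ∑_A y) ≤ C(#s, m) exp (l m ȳ + l² V / 4)`, where `V = ∑_s (y i - ȳ)²`.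
When a point `a` is added to `s`, the `(k+1)`-subsets split into those avoiding `a` and those
containing it, with weights `1 - q` and `q`, `q = (k+1)/(#s+1)`. The two induction hypotheses then
combine through Hoeffding's lemma for a two-point distribution, `1 - q + q eˣ ≤ exp (q x + x² / 8)`,
and the growth `#s/(#s+1) (y a - ȳ)²` of `V` absorbs the `x² / 8` as soon as `#s ≥ 1`.
Markov's inequality with `l = 2 m t / V` gives the tail bound `exp (-m² t² / V)`, which is
`exp (-p_A n_A t² / σ²)` and hence at most the claimed bound since `ς ≥ 0`.
-/

open Finset Real MeasureTheory ProbabilityTheory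
open scoped BigOperators

theorem one_sub_add_mul_exp_le {q : ℝ} (hq0 : 0 ≤ q) (hq1 : q ≤ 1) (x : ℝ) :
    1 - q + q * exp x ≤ exp (q * x + x ^ 2 / 8) := by
  let p : unitInterval := ⟨q, hq0, hq1⟩
  have hsupp : ∀ᵐ ω ∂Ber(1 - q, -q, p), ω ∈ Set.Icc (-q) (1 - q) := by
    rw [bernoulliMeasure_def, ae_add_measure_iff]
    constructor <;> apply Measure.ae_smul_measure <;>
      simp only [ae_dirac_eq, Filter.eventually_pure, Set.mem_Icc] <;> constructor <;> linarith
  have hmean : ∫ ω, ω ∂Ber(1 - q, -q, p) = 0 := by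
    simp only [integral_bernoulliMeasure, smul_eq_mul, p]; ring
  have h := (hasSubgaussianMGF_of_mem_Icc_of_integral_eq_zero aemeasurable_id hsupp hmean).mgf_le x
  simp only [mgf, integral_bernoulliMeasure, id, smul_eq_mul, p, sub_neg_eq_add, sub_add_cancel,
    nnnorm_one] at h
  calc 1 - q + q * exp x = exp (q * x) * (q * exp (x * (1 - q)) + (1 - q) * exp (x * -q)) := by
        rw [mul_add, mul_left_comm, ← exp_add, mul_left_comm, ← exp_add]
        ring_nf
        rw [exp_zero]; ring
    _ ≤ exp (q * x) * exp (x ^ 2 / 8) := by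
        gcongr
        exact h.trans_eq (by norm_num; ring_nf)
    _ = exp (q * x + x ^ 2 / 8) := (exp_add _ _).symm

theorem sq_div_eight_le_div_add_one_mul_sq_div_four {c : ℝ} (hc : 1 ≤ c) (x : ℝ) :
    x ^ 2 / 8 ≤ c / (c + 1) * x ^ 2 / 4 := by
  have : 1 / 2 ≤ c / (c + 1) := by rw [div_le_div_iff₀ (by norm_num) (by linarith)]; linarith
  nlinarith [sq_nonneg x]

theorem cast_choose_eq_div_mul_choose_succ (c k : ℕ) :
    (c.choose k : ℝ) = (k + 1) / (c + 1) * (c + 1).choose (k + 1) := by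
  have h : ((c + 1 : ℕ) * c.choose k : ℝ) = (c + 1).choose (k + 1) * (k + 1 : ℕ) := by
    exact_mod_cast Nat.add_one_mul_choose_eq c k
  push_cast at h
  field_simp
  linarith

theorem cast_choose_succ_eq_one_sub_div_mul_choose_succ (c k : ℕ) :
    (c.choose (k + 1) : ℝ) = (1 - (k + 1) / (c + 1)) * (c + 1).choose (k + 1) := by
  rw [sub_mul, one_mul, ← cast_choose_eq_div_mul_choose_succ, Nat.choose_succ_succ', Nat.cast_add]
  ring

section

variable {ι : Type*}

theorem sum_sub_sq_eq_sum_sub_expect_sq_add (s : Finset ι) (y : ι → ℝ) (c : ℝ) :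
    ∑ i ∈ s, (y i - c) ^ 2 =
      ∑ i ∈ s, (y i - 𝔼 j ∈ s, y j) ^ 2 + #s * (𝔼 j ∈ s, y j - c) ^ 2 := by
  have hdev : ∑ i ∈ s, (y i - 𝔼 j ∈ s, y j) = 0 := by
    rw [sum_sub_distrib, sum_const, nsmul_eq_mul, card_mul_expect, sub_self]
  have hsq : ∀ i ∈ s, (y i - c) ^ 2 = (y i - 𝔼 j ∈ s, y j) ^ 2 +
      2 * (𝔼 j ∈ s, y j - c) * (y i - 𝔼 j ∈ s, y j) + (𝔼 j ∈ s, y j - c) ^ 2 :=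
    fun i _ => by ring
  rw [sum_congr rfl hsq, sum_add_distrib, sum_add_distrib, ← mul_sum, hdev, sum_const,
    nsmul_eq_mul]
  ring

theorem sum_powersetCard_exp_le_of_card_le {s : Finset ι} {m : ℕ} (hm : #s ≤ m) (y : ι → ℝ)
    (l : ℝ) :
    ∑ A ∈ powersetCard m s, exp (l * ∑ i ∈ A, y i) ≤ ((#s).choose m : ℝ) *
      exp (l * m * (𝔼 i ∈ s, y i) + l ^ 2 * (∑ i ∈ s, (y i - 𝔼 j ∈ s, y j) ^ 2) / 4) := by
  rcases hm.eq_or_lt with rfl | hlt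
  · rw [powersetCard_self, sum_singleton, Nat.choose_self, Nat.cast_one, one_mul, mul_assoc,
      card_mul_expect]
    gcongr
    exact le_add_of_nonneg_right (by positivity)
  · rw [powersetCard_eq_empty.2 hlt, sum_empty, Nat.choose_eq_zero_of_lt hlt, Nat.cast_zero,
      zero_mul]

variable [DecidableEq ι]

theorem sum_powersetCard_succ_insert {β : Type*} [AddCommMonoid β] {a : ι} {s : Finset ι}
    (ha : a ∉ s) (k : ℕ) (f : Finset ι → β) :
    ∑ A ∈ powersetCard (k + 1) (insert a s), f A =
      ∑ A ∈ powersetCard (k + 1) s, f A + ∑ A ∈ powersetCard k s, f (insert a A) := by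
  rw [powersetCard_succ_insert ha, sum_union, sum_image]
  · intro A hA B hB hAB
    have haA : a ∉ A := fun h => ha ((mem_powersetCard.1 hA).1 h)
    have haB : a ∉ B := fun h => ha ((mem_powersetCard.1 hB).1 h)
    rw [← erase_insert haA, ← erase_insert haB, hAB]
  · rw [disjoint_left]
    intro A hA hA'
    obtain ⟨B, -, rfl⟩ := mem_image.1 hA'
    exact ha ((mem_powersetCard.1 hA).1 (mem_insert_self a B))

theorem expect_insert_of_notMem {a : ι} {s : Finset ι} (ha : a ∉ s) (y : ι → ℝ) :
    𝔼 i ∈ insert a s, y i = 𝔼 i ∈ s, y i + (y a - 𝔼 i ∈ s, y i) / (#s + 1) := by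
  have h := card_mul_expect (insert a s) y
  rw [card_insert_of_notMem ha, sum_insert ha, ← card_mul_expect s y] at h
  push_cast at h
  field_simp
  linarith

theorem sum_sub_expect_sq_insert {a : ι} {s : Finset ι} (ha : a ∉ s) (y : ι → ℝ) :
    ∑ i ∈ insert a s, (y i - 𝔼 j ∈ insert a s, y j) ^ 2 =
      ∑ i ∈ s, (y i - 𝔼 j ∈ s, y j) ^ 2 + #s / (#s + 1) * (y a - 𝔼 j ∈ s, y j) ^ 2 := by
  rw [sum_insert ha, sum_sub_sq_eq_sum_sub_expect_sq_add s, expect_insert_of_notMem ha]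
  field_simp
  ring

theorem sum_powersetCard_succ_insert_exp_le {a : ι} {s : Finset ι} (ha : a ∉ s) {k : ℕ}
    (hk : k < #s) (y : ι → ℝ) (l : ℝ)
    (h₁ : ∑ A ∈ powersetCard (k + 1) s, exp (l * ∑ i ∈ A, y i) ≤ ((#s).choose (k + 1) : ℝ) *
      exp (l * (k + 1 : ℕ) * (𝔼 i ∈ s, y i) + l ^ 2 * (∑ i ∈ s, (y i - 𝔼 j ∈ s, y j) ^ 2) / 4))
    (h₀ : ∑ A ∈ powersetCard k s, exp (l * ∑ i ∈ A, y i) ≤ ((#s).choose k : ℝ) *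
      exp (l * k * (𝔼 i ∈ s, y i) + l ^ 2 * (∑ i ∈ s, (y i - 𝔼 j ∈ s, y j) ^ 2) / 4)) :
    ∑ A ∈ powersetCard (k + 1) (insert a s), exp (l * ∑ i ∈ A, y i) ≤
      ((#(insert a s)).choose (k + 1) : ℝ) * exp (l * (k + 1 : ℕ) * (𝔼 i ∈ insert a s, y i) +
        l ^ 2 * (∑ i ∈ insert a s, (y i - 𝔼 j ∈ insert a s, y j) ^ 2) / 4) := by
  have hinsert : ∑ A ∈ powersetCard k s, exp (l * ∑ i ∈ insert a A, y i) =
      exp (l * y a) * ∑ A ∈ powersetCard k s, exp (l * ∑ i ∈ A, y i) := by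
    rw [mul_sum]
    refine sum_congr rfl fun A hA => ?_
    rw [sum_insert fun h => ha ((mem_powersetCard.1 hA).1 h), ← exp_add]
    ring_nf
  rw [sum_powersetCard_succ_insert ha, hinsert, card_insert_of_notMem ha,
    sum_sub_expect_sq_insert ha, expect_insert_of_notMem ha]
  set V := ∑ i ∈ s, (y i - 𝔼 j ∈ s, y j) ^ 2
  set μ := 𝔼 i ∈ s, y i
  set c := #s
  set b := y a - μ with hb
  set q : ℝ := (k + 1) / (c + 1) with hq
  set E := l * (k + 1) * μ + l ^ 2 * V / 4 with hE
  have hc : (1 : ℝ) ≤ c := by exact_mod_cast (Nat.zero_lt_of_lt hk)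
  have hq0 : 0 ≤ q := by positivity
  have hq1 : q ≤ 1 := by
    rw [div_le_one (by positivity)]; exact_mod_cast Nat.succ_le_succ hk.le
  have hexp : exp (l * y a) * exp (E - l * μ) = exp E * exp (l * b) := by
    rw [← exp_add, ← exp_add, hb, hE]; ring_nf
  have hexponent : E + (q * (l * b) + (l * b) ^ 2 / 8) ≤
      l * (k + 1) * (μ + b / (c + 1)) + l ^ 2 * (V + c / (c + 1) * b ^ 2) / 4 := by
    rw [hE, hq]
    linear_combination sq_div_eight_le_div_add_one_mul_sq_div_four hc (l * b)
  calc _ ≤ (c.choose (k + 1) : ℝ) * exp E +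
        exp (l * y a) * ((c.choose k : ℝ) * exp (E - l * μ)) := by
        gcongr
        · exact h₁.trans_eq (by push_cast; rfl)
        · exact h₀.trans_eq (by rw [hE]; ring_nf)
    _ = ((c + 1).choose (k + 1) : ℝ) * exp E * (1 - q + q * exp (l * b)) := by
        rw [cast_choose_succ_eq_one_sub_div_mul_choose_succ c k,
          cast_choose_eq_div_mul_choose_succ c k]
        linear_combination ((k + 1) / (c + 1) * ((c + 1).choose (k + 1) : ℝ)) * hexp
    _ ≤ ((c + 1).choose (k + 1) : ℝ) * exp E * exp (q * (l * b) + (l * b) ^ 2 / 8) := by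
        gcongr; exact one_sub_add_mul_exp_le hq0 hq1 _
    _ ≤ _ := by
        rw [mul_assoc, ← exp_add]
        push_cast
        exact mul_le_mul_of_nonneg_left (exp_le_exp.2 hexponent) (by positivity)

theorem sum_powersetCard_exp_le (y : ι → ℝ) (l : ℝ) (s : Finset ι) (m : ℕ) :
    ∑ A ∈ powersetCard m s, exp (l * ∑ i ∈ A, y i) ≤ ((#s).choose m : ℝ) *
      exp (l * m * (𝔼 i ∈ s, y i) + l ^ 2 * (∑ i ∈ s, (y i - 𝔼 j ∈ s, y j) ^ 2) / 4) := by
  induction s using Finset.induction_on generalizing m with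
  | empty => exact sum_powersetCard_exp_le_of_card_le (Nat.zero_le m) y l
  | insert a s ha ih =>
    cases m with
    | zero =>
      simp only [powersetCard_zero, sum_singleton, sum_empty, mul_zero, exp_zero,
        Nat.choose_zero_right, Nat.cast_zero, Nat.cast_one, zero_mul, zero_add, one_mul]
      exact one_le_exp (by positivity)
    | succ k =>
      by_cases hk : k < #s
      · exact sum_powersetCard_succ_insert_exp_le ha hk y l (ih (k + 1)) (ih k)
      · refine sum_powersetCard_exp_le_of_card_le ?_ y l
        rw [card_insert_of_notMem ha]
        omega

theorem card_filter_powersetCard_le_choose_mul_exp (z : ι → ℝ) (s : Finset ι) (m : ℕ) {t : ℝ}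
    (ht : 0 ≤ t) :
    (#{A ∈ powersetCard m s | t ≤ 𝔼 i ∈ A, z i - 𝔼 i ∈ s, z i} : ℝ) ≤
      (#s).choose m * exp (-(m ^ 2 * t ^ 2 / ∑ i ∈ s, (z i - 𝔼 j ∈ s, z j) ^ 2)) := by
  set F := {A ∈ powersetCard m s | t ≤ 𝔼 i ∈ A, z i - 𝔼 i ∈ s, z i}
  set μ := 𝔼 i ∈ s, z i
  set V := ∑ i ∈ s, (z i - 𝔼 j ∈ s, z j) ^ 2
  rcases (show 0 ≤ V by positivity).eq_or_lt with hV | hV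
  · rw [← hV, div_zero, neg_zero, exp_zero, mul_one, ← card_powersetCard]
    exact_mod_cast card_filter_le _ _
  set l := 2 * m * t / V with hl
  have hmarkov : #F * exp (l * (m * μ + m * t)) ≤
      ∑ A ∈ powersetCard m s, exp (l * ∑ i ∈ A, z i) := by
    rw [← nsmul_eq_mul]
    refine (card_nsmul_le_sum F _ _ fun A hA => ?_).trans
      (sum_le_sum_of_subset_of_nonneg (filter_subset _ _) fun _ _ _ => (exp_pos _).le)
    obtain ⟨hAm, hAt⟩ := mem_filter.1 hA
    rw [← card_mul_expect, (mem_powersetCard.1 hAm).2]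
    gcongr
    nlinarith
  have hexponent : l * m * μ + l ^ 2 * V / 4 = -(m ^ 2 * t ^ 2 / V) + l * (m * μ + m * t) := by
    rw [hl]
    field_simp
    ring
  refine le_of_mul_le_mul_right ?_ (exp_pos (l * (m * μ + m * t)))
  calc _ ≤ _ := hmarkov
    _ ≤ _ := sum_powersetCard_exp_le z l s m
    _ = _ := by rw [hexponent, exp_add, mul_assoc]

end

theorem massart_sampling_without_replacement_general
    (n nA : ℕ) (hn : 0 < n)
    (z : Fin n → ℝ) (t : ℝ) (ht : 0 < t) :
    let zbar : ℝ := (∑ i, z i) / n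
    let σ2 : ℝ := (∑ i, (z i - zbar) ^ 2) / n
    let pA : ℝ := (nA : ℝ) / n
    let ς : ℝ := min (1 / 70) (min ((3 * pA) ^ 2 / 70) ((3 - 3 * pA) ^ 2 / 70))
    ((((Finset.univ : Finset (Fin n)).powersetCard nA).filter
        (fun A => (∑ i ∈ A, z i) / nA - zbar ≥ t)).card : ℝ) / (n.choose nA : ℝ)
      ≤ Real.exp (-(pA * nA * t ^ 2) / ((1 + ς) ^ 2 * σ2)) := by
  intro zbar σ2 pA ς
  have hzbar : zbar = 𝔼 i : Fin n, z i := by simp [zbar, Fintype.expect_eq_sum_div_card]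
  have hfilter : ((univ : Finset (Fin n)).powersetCard nA).filter
      (fun A => (∑ i ∈ A, z i) / nA - zbar ≥ t) =
      {A ∈ powersetCard nA (univ : Finset (Fin n)) | t ≤ 𝔼 i ∈ A, z i - 𝔼 i, z i} := by
    refine filter_congr fun A hA => ?_
    rw [expect_eq_sum_div_card, (mem_powersetCard.1 hA).2, hzbar, ge_iff_le]
  have hexponent : pA * nA * t ^ 2 / ((1 + ς) ^ 2 * σ2) ≤
      nA ^ 2 * t ^ 2 / ∑ i, (z i - 𝔼 j, z j) ^ 2 := by
    have hσ2 : σ2 = (∑ i, (z i - 𝔼 j, z j) ^ 2) / n := by simp only [σ2, hzbar]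
    have hpA : pA * nA * t ^ 2 = nA ^ 2 * t ^ 2 / n := by simp only [pA]; ring
    rw [hσ2, hpA, mul_div_assoc', div_div_div_cancel_right₀ (Nat.cast_ne_zero.2 hn.ne'),
      mul_comm ((1 + ς) ^ 2), ← div_div]
    exact div_le_self (by positivity) (one_le_pow₀ (le_add_of_nonneg_right (by positivity)))
  rw [hfilter]
  calc _ ≤ exp (-(nA ^ 2 * t ^ 2 / ∑ i, (z i - 𝔼 j, z j) ^ 2)) := by
        refine div_le_of_le_mul₀ (by positivity) (by positivity) ?_
        refine (card_filter_powersetCard_le_choose_mul_exp z univ nA ht.le).trans_eq ?_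
        rw [card_univ, Fintype.card_fin, mul_comm]
    _ ≤ _ := by
        rw [neg_div]
        exact exp_le_exp.2 (neg_le_neg hexponent)

/-- Massart concentration inequality for sampling without replacement:
for a finite population `z`, a uniformly random subset `A` of size `nA`
satisfies the stated exponential tail bound for the deviation of the sample
mean above the population mean. -/
theorem massart_sampling_without_replacement
    (n nA : ℕ) (hn : 0 < n) (hnA : 0 < nA) (hle : nA ≤ n)
    (z : Fin n → ℝ) (t : ℝ) (ht : 0 < t) :
    let zbar : ℝ := (∑ i, z i) / n
    let σ2 : ℝ := (∑ i, (z i - zbar) ^ 2) / n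
    let pA : ℝ := (nA : ℝ) / n
    let ς : ℝ := min (1 / 70) (min ((3 * pA) ^ 2 / 70) ((3 - 3 * pA) ^ 2 / 70))
    ((((Finset.univ : Finset (Fin n)).powersetCard nA).filter
        (fun A => (∑ i ∈ A, z i) / nA - zbar ≥ t)).card : ℝ) / (n.choose nA : ℝ)
      ≤ Real.exp (-(pA * nA * t ^ 2) / ((1 + ς) ^ 2 * σ2)) :=
  massart_sampling_without_replacement_general n nA hn z t ht
end

section
/- Under the assumptions of the previous variance decomposition (residuals orthogonal to fitted values, centered covariates), the asymptotic variance difference satisfies σ²_{Xβ^(a)-Xβ^(b)} - σ²_{Xβ^(a)}/p_A - σ²_{Xβ^(b)}/(1-p_A) = -σ²_{Xβ_E}/(p_A(1-p_A)) ≤ 0, where β_E = (1-p_A)β^(a) + p_A β^(b) and p_A ∈ (0,1). In particular, (1/p_A)σ²_{e^(a)} + (1/(1-p_A))σ²_{e^(b)} - σ²_{e^(a)-e^(b)} ≤ (1/p_A)σ²_a + (1/(1-p_A))σ²_b - σ²_{a-b}. -/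
open Finset

/-- Sample variance of the entries of a finite vector. -/
noncomputable def popVar {n : ℕ} (v : Fin n → ℝ) : ℝ :=
  (∑ i, (v i - (∑ j, v j) / n) ^ 2) / ((n : ℝ) - 1)

lemma popVar_nonneg {n : ℕ} (v : Fin n → ℝ) : 0 ≤ popVar v := by
  unfold popVar
  rcases Nat.eq_zero_or_pos n with h | h
  · subst h; simp
  · apply div_nonneg (Finset.sum_nonneg fun i _ => sq_nonneg _)
    have : (1:ℝ) ≤ n := by exact_mod_cast h
    linarith

lemma popVar_of_sum_zero {n : ℕ} (v : Fin n → ℝ) (h : ∑ i, v i = 0) :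
    popVar v = (∑ i, v i ^ 2) / ((n : ℝ) - 1) := by
  unfold popVar; rw [h]; simp

lemma aux1 {n : ℕ} (u v w : Fin n → ℝ) (pA : ℝ) (hpA : 0 < pA) (hpA1 : pA < 1)
    (hu : ∑ i, u i = 0) (hv : ∑ i, v i = 0)
    (hw : ∀ i, w i = (1 - pA) * u i + pA * v i) :
    popVar (fun i => u i - v i) - popVar u / pA - popVar v / (1 - pA)
      = -(popVar w / (pA * (1 - pA))) := by
  have hpA0 : pA ≠ 0 := ne_of_gt hpA
  have h1pA : (1 : ℝ) - pA ≠ 0 := by linarith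
  set c : ℝ := (n : ℝ) - 1 with hc
  set Suu : ℝ := ∑ i, u i ^ 2 with hSuu
  set Svv : ℝ := ∑ i, v i ^ 2 with hSvv
  set Suv : ℝ := ∑ i, u i * v i with hSuv
  have huv0 : ∑ i, (u i - v i) = 0 := by
    rw [Finset.sum_sub_distrib, hu, hv]; ring
  have hw0 : ∑ i, w i = 0 := by
    calc ∑ i, w i = ∑ i, ((1 - pA) * u i + pA * v i) :=
          Finset.sum_congr rfl fun i _ => hw i
      _ = (1 - pA) * (∑ i, u i) + pA * (∑ i, v i) := by
          rw [Finset.sum_add_distrib, Finset.mul_sum, Finset.mul_sum]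
      _ = 0 := by rw [hu, hv]; ring
  have hNuv : ∑ i, (u i - v i) ^ 2 = Suu - 2 * Suv + Svv := by
    rw [hSuu, hSvv, hSuv, Finset.mul_sum, ← Finset.sum_sub_distrib, ← Finset.sum_add_distrib]
    exact Finset.sum_congr rfl fun i _ => by ring
  have hNw : ∑ i, w i ^ 2
      = (1 - pA) ^ 2 * Suu + 2 * pA * (1 - pA) * Suv + pA ^ 2 * Svv := by
    rw [hSuu, hSvv, hSuv, Finset.mul_sum, Finset.mul_sum, Finset.mul_sum,
      ← Finset.sum_add_distrib, ← Finset.sum_add_distrib]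
    exact Finset.sum_congr rfl fun i _ => by rw [hw i]; ring
  rw [popVar_of_sum_zero _ huv0, popVar_of_sum_zero _ hu, popVar_of_sum_zero _ hv,
    popVar_of_sum_zero _ hw0, hNuv, hNw]
  rw [div_right_comm Suu c pA, div_right_comm Svv c (1 - pA),
    div_right_comm _ c (pA * (1 - pA)), ← sub_div, ← sub_div, ← neg_div]
  congr 1
  field_simp
  ring

lemma popVar_shift {n : ℕ} (c0 : ℝ) (u e : Fin n → ℝ)
    (hu : ∑ i, u i = 0) (he : ∑ i, e i = 0) (horth : ∑ i, e i * u i = 0) :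
    popVar (fun i => c0 + u i + e i) = popVar u + popVar e := by
  rcases Nat.eq_zero_or_pos n with h | h
  · subst h; simp [popVar]
  have hn : (n : ℝ) ≠ 0 := by exact_mod_cast h.ne'
  have hmean : (∑ j, (c0 + u j + e j)) / n = c0 := by
    rw [Finset.sum_add_distrib, Finset.sum_add_distrib, hu, he, Finset.sum_const]
    simp [mul_comm]
    field_simp
  have hnum : ∑ i, ((c0 + u i + e i) - (∑ j, (c0 + u j + e j)) / n) ^ 2
      = (∑ i, u i ^ 2) + (∑ i, e i ^ 2) := by
    rw [hmean]
    calc ∑ i, (c0 + u i + e i - c0) ^ 2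
        = ∑ i, (u i ^ 2 + e i ^ 2 + 2 * (e i * u i)) :=
          Finset.sum_congr rfl fun i _ => by ring
      _ = (∑ i, u i ^ 2) + (∑ i, e i ^ 2) + 2 * ∑ i, e i * u i := by
          rw [Finset.sum_add_distrib, Finset.sum_add_distrib, Finset.mul_sum]
      _ = _ := by rw [horth]; ring
  rw [popVar_of_sum_zero u hu, popVar_of_sum_zero e he]
  unfold popVar
  rw [hnum, add_div]

/-- The asymptotic variance difference: the fitted-values variance combination
equals `-σ²_{XβE}/(pA(1-pA)) ≤ 0`, and consequently the residual-based variance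
expression is no greater than the outcome-based one. -/
theorem variance_difference_nonpositive
    (n p : ℕ) (a b : Fin n → ℝ) (X : Fin n → Fin p → ℝ)
    (βa βb : Fin p → ℝ) (ea eb : Fin n → ℝ) (abar bbar : ℝ)
    (pA : ℝ) (hpA : 0 < pA) (hpA1 : pA < 1)
    (ha : ∀ i, a i = abar + (∑ j, X i j * βa j) + ea i)
    (hb : ∀ i, b i = bbar + (∑ j, X i j * βb j) + eb i)
    (horth_aa : ∑ i, ea i * (∑ j, X i j * βa j) = 0)
    (horth_ab : ∑ i, ea i * (∑ j, X i j * βb j) = 0)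
    (horth_ba : ∑ i, eb i * (∑ j, X i j * βa j) = 0)
    (horth_bb : ∑ i, eb i * (∑ j, X i j * βb j) = 0)
    (hmean_a : ∑ i, ea i = 0) (hmean_b : ∑ i, eb i = 0)
    (hcols : ∀ j, ∑ i, X i j = 0) :
    (popVar (fun i => (∑ j, X i j * βa j) - ∑ j, X i j * βb j)
        - popVar (fun i => ∑ j, X i j * βa j) / pA
        - popVar (fun i => ∑ j, X i j * βb j) / (1 - pA)
      = -(popVar (fun i => ∑ j, X i j * ((1 - pA) * βa j + pA * βb j))
          / (pA * (1 - pA)))) ∧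
    (-(popVar (fun i => ∑ j, X i j * ((1 - pA) * βa j + pA * βb j))
        / (pA * (1 - pA))) ≤ 0) ∧
    (popVar ea / pA + popVar eb / (1 - pA) - popVar (ea - eb)
      ≤ popVar a / pA + popVar b / (1 - pA) - popVar (a - b)) := by
  have hu0 : ∑ i, (∑ j, X i j * βa j) = 0 := by
    rw [Finset.sum_comm]
    refine Finset.sum_eq_zero fun j _ => ?_
    rw [← Finset.sum_mul, hcols j, zero_mul]
  have hv0 : ∑ i, (∑ j, X i j * βb j) = 0 := by
    rw [Finset.sum_comm]
    refine Finset.sum_eq_zero fun j _ => ?_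
    rw [← Finset.sum_mul, hcols j, zero_mul]
  have hwlin : ∀ i, (∑ j, X i j * ((1 - pA) * βa j + pA * βb j))
      = (1 - pA) * (∑ j, X i j * βa j) + pA * (∑ j, X i j * βb j) := by
    intro i
    rw [Finset.mul_sum, Finset.mul_sum, ← Finset.sum_add_distrib]
    exact Finset.sum_congr rfl fun j _ => by ring
  have key := aux1 (fun i => ∑ j, X i j * βa j) (fun i => ∑ j, X i j * βb j)
    (fun i => ∑ j, X i j * ((1 - pA) * βa j + pA * βb j)) pA hpA hpA1 hu0 hv0 hwlin
  have hprodpos : 0 < pA * (1 - pA) := by nlinarith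
  have hDnn : 0 ≤ popVar (fun i => ∑ j, X i j * ((1 - pA) * βa j + pA * βb j))
      / (pA * (1 - pA)) := div_nonneg (popVar_nonneg _) hprodpos.le
  refine ⟨key, by linarith, ?_⟩
  have hab : popVar a = popVar (fun i => ∑ j, X i j * βa j) + popVar ea := by
    rw [show a = fun i => abar + (∑ j, X i j * βa j) + ea i from funext ha]
    exact popVar_shift abar _ ea hu0 hmean_a horth_aa
  have hbb : popVar b = popVar (fun i => ∑ j, X i j * βb j) + popVar eb := by
    rw [show b = fun i => bbar + (∑ j, X i j * βb j) + eb i from funext hb]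
    exact popVar_shift bbar _ eb hv0 hmean_b horth_bb
  have hsumuv : ∑ i, ((∑ j, X i j * βa j) - ∑ j, X i j * βb j) = 0 := by
    rw [Finset.sum_sub_distrib, hu0, hv0]; ring
  have hsume : ∑ i, (ea i - eb i) = 0 := by
    rw [Finset.sum_sub_distrib, hmean_a, hmean_b]; ring
  have horthd : ∑ i, (ea i - eb i) * ((∑ j, X i j * βa j) - ∑ j, X i j * βb j) = 0 := by
    calc ∑ i, (ea i - eb i) * ((∑ j, X i j * βa j) - ∑ j, X i j * βb j)
        = ∑ i, (ea i * (∑ j, X i j * βa j) - ea i * (∑ j, X i j * βb j)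
            - eb i * (∑ j, X i j * βa j) + eb i * (∑ j, X i j * βb j)) :=
          Finset.sum_congr rfl fun i _ => by ring
      _ = 0 := by
          rw [Finset.sum_add_distrib, Finset.sum_sub_distrib, Finset.sum_sub_distrib,
            horth_aa, horth_ab, horth_ba, horth_bb]; ring
  have hdiff : popVar (a - b)
      = popVar (fun i => (∑ j, X i j * βa j) - ∑ j, X i j * βb j) + popVar (ea - eb) := by
    rw [show a - b = fun i => (abar - bbar) + ((∑ j, X i j * βa j) - ∑ j, X i j * βb j)
        + (ea i - eb i) from funext fun i => by rw [Pi.sub_apply, ha i, hb i]; ring]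
    exact popVar_shift (abar - bbar) _ (fun i => ea i - eb i) hsumuv hsume horthd
  rw [hab, hbb, hdiff, add_div, add_div]
  linarith [key, hDnn]
end

section
/- Let h ∈ ℝ^p, S ⊂ {1,...,p}, and real numbers η ∈ (0,1), λ > 0, s > 0 satisfy (1-η)‖h_{S^c}‖₁ ≤ (1+η)‖h_S‖₁ + 2sλ. If additionally (1+η)‖h_S‖₁ + 2sλ ≥ (1-η)ξ‖h_S‖₁ for some ξ > (1+η)/(1-η), then ‖h‖₁ ≤ (2sλ/(1-η))·(2/((1-η)ξ - (1+η)) + 1). -/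
/-!
The cone condition gives `‖h‖₁ = ‖h_S‖₁ + ‖h_{Sᶜ}‖₁ ≤ (2‖h_S‖₁ + 2sλ)/(1-η)`, and the second
hypothesis says `((1-η)ξ - (1+η))‖h_S‖₁ ≤ 2sλ` with a positive gap, which bounds `‖h_S‖₁`.
-/

open Finset

section ConeBounds

variable {η ξ a b t : ℝ}

lemma cone_gap_pos (hη1 : η < 1) (hξ : (1 + η) / (1 - η) < ξ) :
    0 < (1 - η) * ξ - (1 + η) := by
  have := (div_lt_iff₀ (sub_pos.2 hη1)).1 hξ
  linarith

lemma add_le_div_of_cone (hη1 : η < 1) (h : (1 - η) * b ≤ (1 + η) * a + t) :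
    a + b ≤ (2 * a + t) / (1 - η) := by
  rw [le_div_iff₀ (sub_pos.2 hη1)]
  linarith

end ConeBounds

theorem l1_bound_case_one_general
    {p : ℕ} (h : Fin p → ℝ) (S : Finset (Fin p))
    (η lam s ξ : ℝ) (hη1 : η < 1)
    (hξ : (1 + η) / (1 - η) < ξ)
    (h1 : (1 - η) * ∑ i ∈ Sᶜ, |h i| ≤ (1 + η) * (∑ i ∈ S, |h i|) + 2 * s * lam)
    (h2 : (1 - η) * ξ * (∑ i ∈ S, |h i|)
        ≤ (1 + η) * (∑ i ∈ S, |h i|) + 2 * s * lam) :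
    ∑ i, |h i|
      ≤ (2 * s * lam / (1 - η)) * (2 / ((1 - η) * ξ - (1 + η)) + 1) := by
  have hgap := cone_gap_pos hη1 hξ
  have hS : ∑ i ∈ S, |h i| ≤ 2 * s * lam / ((1 - η) * ξ - (1 + η)) :=
    (le_div_iff₀ hgap).2 (by linarith)
  rw [← sum_add_sum_compl S]
  calc _ ≤ (2 * ∑ i ∈ S, |h i| + 2 * s * lam) / (1 - η) := add_le_div_of_cone hη1 h1
    _ ≤ (2 * (2 * s * lam / ((1 - η) * ξ - (1 + η))) + 2 * s * lam) / (1 - η) := by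
      gcongr
    _ = _ := by ring

/-- Case (I) of the Elastic Net consistency proof: if
`(1-η)‖h_{Sᶜ}‖₁ ≤ (1+η)‖h_S‖₁ + 2sλ` and
`(1+η)‖h_S‖₁ + 2sλ ≥ (1-η)ξ‖h_S‖₁` with `ξ > (1+η)/(1-η)`, then
`‖h‖₁ ≤ (2sλ/(1-η))(2/((1-η)ξ - (1+η)) + 1)`. -/
theorem l1_bound_case_one
    {p : ℕ} (h : Fin p → ℝ) (S : Finset (Fin p))
    (η lam s ξ : ℝ) (hη0 : 0 < η) (hη1 : η < 1) (hlam : 0 < lam) (hs : 0 < s)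
    (hξ : (1 + η) / (1 - η) < ξ)
    (h1 : (1 - η) * ∑ i ∈ Sᶜ, |h i| ≤ (1 + η) * (∑ i ∈ S, |h i|) + 2 * s * lam)
    (h2 : (1 - η) * ξ * (∑ i ∈ S, |h i|)
        ≤ (1 + η) * (∑ i ∈ S, |h i|) + 2 * s * lam) :
    ∑ i, |h i|
      ≤ (2 * s * lam / (1 - η)) * (2 / ((1 - η) * ξ - (1 + η)) + 1) :=
  l1_bound_case_one_general h S η lam s ξ hη1 hξ h1 h2
end

section
/- Let Δ = |Σ̂(β - β̂)| (coordinatewise absolute value) for a symmetric PSD matrix Σ̂ ∈ ℝ^{p×p} with λ_max(Σ̂) ≤ Λ, and suppose Δ_j ≥ (1-η)λ for every j with β̂_j ≠ 0, where η ∈ (0,1), λ > 0, and that (β-β̂)^T Σ̂ (β-β̂) ≤ (1+η)λ‖β-β̂‖₁. Then the number of nonzero coordinates of β̂ satisfies ŝ ≤ Λ(1+η)‖β-β̂‖₁ / ((1-η)²λ). -/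
/-!
On the support of `β̂` every `Δ_j² ≥ ((1-η)λ)²`, hence
`ŝ ((1-η)λ)² ≤ ΔᵀΔ ≤ Λ (β-β̂)ᵀΣ̂(β-β̂) ≤ Λ (1+η) λ ‖β-β̂‖₁`,
where the middle step is `Σ̂² ≤ Λ Σ̂`, i.e. `Λx - x² ≥ 0` on the spectrum `[0, Λ]` of `Σ̂`.
-/

open Finset Matrix
open scoped MatrixOrder ComplexOrder

namespace Matrix

variable {n : Type*} [Fintype n]

theorem PosSemidef.posSemidef_smul_sub_mul_self [DecidableEq n] {𝕜 : Type*} [RCLike 𝕜]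
    {A : Matrix n n 𝕜} (hA : A.PosSemidef) {Λ : ℝ} (hΛ : ∀ i, hA.1.eigenvalues i ≤ Λ) :
    (Λ • A - A * A).PosSemidef := by
  have hA' : IsSelfAdjoint A := hA.1
  have hcfc : Λ • A - A * A = cfc (fun x : ℝ => Λ * x - x * x) A := by
    rw [cfc_sub _ _ A, cfc_const_mul _ _ A, cfc_mul _ _ A, cfc_id' ℝ A]
  rw [hcfc, ← nonneg_iff_posSemidef]
  refine cfc_nonneg fun x hx => ?_
  obtain ⟨i, rfl⟩ := hA.1.spectrum_real_eq_range_eigenvalues ▸ hx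
  nlinarith [hΛ i, hA.eigenvalues_nonneg i]

theorem PosSemidef.mulVec_dotProduct_mulVec_le [DecidableEq n] {A : Matrix n n ℝ}
    (hA : A.PosSemidef) {Λ : ℝ} (hΛ : ∀ i, hA.1.eigenvalues i ≤ Λ) (v : n → ℝ) :
    A *ᵥ v ⬝ᵥ A *ᵥ v ≤ Λ * (v ⬝ᵥ A *ᵥ v) := by
  have hsymm : Aᵀ = A := by rw [← conjTranspose_eq_transpose_of_trivial, hA.1.eq]
  have hsq : v ⬝ᵥ A *ᵥ A *ᵥ v = A *ᵥ v ⬝ᵥ A *ᵥ v := by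
    rw [dotProduct_mulVec, ← mulVec_transpose, hsymm]
  have h := (hA.posSemidef_smul_sub_mul_self hΛ).dotProduct_mulVec_nonneg v
  rwa [star_trivial, sub_mulVec, dotProduct_sub, smul_mulVec, dotProduct_smul, ← mulVec_mulVec,
    hsq, smul_eq_mul, sub_nonneg] at h

end Matrix

theorem Finset.card_mul_sq_le_dotProduct_self {ι : Type*} [Fintype ι] {s : Finset ι}
    {w : ι → ℝ} {c : ℝ} (hc : 0 ≤ c) (h : ∀ j ∈ s, c ≤ |w j|) :
    (#s : ℝ) * c ^ 2 ≤ w ⬝ᵥ w :=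
  calc (#s : ℝ) * c ^ 2 ≤ ∑ j ∈ s, w j * w j := by
        rw [← nsmul_eq_mul]
        refine card_nsmul_le_sum s _ _ fun j hj => ?_
        simpa only [← sq, sq_abs] using pow_le_pow_left₀ hc (h j hj) 2
    _ ≤ w ⬝ᵥ w := sum_le_univ_sum_of_nonneg fun j => mul_self_nonneg (w j)

theorem selected_variables_bound_general
    {p : ℕ} (β βhat : Fin p → ℝ) (Shat : Matrix (Fin p) (Fin p) ℝ)
    (Λ η lam : ℝ) (hΛ : 0 < Λ) (hη1 : η < 1) (hlam : 0 < lam)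
    (hpsd : Shat.PosSemidef)
    (hmax : ∀ i, hpsd.1.eigenvalues i ≤ Λ)
    (hΔ : ∀ j, βhat j ≠ 0 →
      (1 - η) * lam ≤ |Shat.mulVec (fun k => β k - βhat k) j|)
    (hquad : (fun k => β k - βhat k) ⬝ᵥ (Shat *ᵥ fun k => β k - βhat k)
        ≤ (1 + η) * lam * ∑ j, |β j - βhat j|) :
    ((Finset.univ.filter (fun j => βhat j ≠ 0)).card : ℝ)
      ≤ Λ * (1 + η) * (∑ j, |β j - βhat j|) / ((1 - η) ^ 2 * lam) := by
  set v : Fin p → ℝ := fun k => β k - βhat k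
  have hbound := calc
    (#(univ.filter fun j => βhat j ≠ 0) : ℝ) * ((1 - η) * lam) ^ 2 ≤ Shat *ᵥ v ⬝ᵥ Shat *ᵥ v :=
      card_mul_sq_le_dotProduct_self (mul_nonneg (sub_nonneg.2 hη1.le) hlam.le)
        fun j hj => hΔ j (mem_filter.1 hj).2
    _ ≤ Λ * (v ⬝ᵥ Shat *ᵥ v) := hpsd.mulVec_dotProduct_mulVec_le hmax v
    _ ≤ Λ * ((1 + η) * lam * ∑ j, |β j - βhat j|) := mul_le_mul_of_nonneg_left hquad hΛ.le
  rw [le_div_iff₀ (mul_pos (pow_pos (sub_pos.2 hη1) 2) hlam)]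
  refine le_of_mul_le_mul_right ?_ hlam
  linarith

/-- Bound on the number of selected variables: if `Δ = |Σ̂(β - β̂)|` is at
least `(1-η)λ` on the support of `β̂`, `Σ̂` is PSD with `λmax(Σ̂) ≤ Λ`, and the
quadratic form satisfies `(β-β̂)ᵀΣ̂(β-β̂) ≤ (1+η)λ‖β-β̂‖₁`, then
`ŝ ≤ Λ(1+η)‖β-β̂‖₁/((1-η)²λ)`. -/
theorem selected_variables_bound
    {p : ℕ} (β βhat : Fin p → ℝ) (Shat : Matrix (Fin p) (Fin p) ℝ)
    (Λ η lam : ℝ) (hΛ : 0 < Λ) (hη0 : 0 < η) (hη1 : η < 1) (hlam : 0 < lam)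
    (hpsd : Shat.PosSemidef)
    (hmax : ∀ i, hpsd.1.eigenvalues i ≤ Λ)
    (hΔ : ∀ j, βhat j ≠ 0 →
      (1 - η) * lam ≤ |Shat.mulVec (fun k => β k - βhat k) j|)
    (hquad : (fun k => β k - βhat k) ⬝ᵥ (Shat *ᵥ fun k => β k - βhat k)
        ≤ (1 + η) * lam * ∑ j, |β j - βhat j|) :
    ((Finset.univ.filter (fun j => βhat j ≠ 0)).card : ℝ)
      ≤ Λ * (1 + η) * (∑ j, |β j - βhat j|) / ((1 - η) ^ 2 * lam) :=
  selected_variables_bound_general β βhat Shat Λ η lam hΛ hη1 hlam hpsd hmax hΔ hquad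
end
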